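/- Let F be a distribution on [-c,∞) for some c ≥ 0 such that m(F) = ∫ e^{γy} F(dy) < ∞ and F^{*2} ∈ L(γ) for some γ ≥ 0. If a(F) := limsup_{k→∞} limsup_{x→∞} ∫_{(k, x-k]} F̄(x-y) F(dy) / (F^{*2})̄(x) < 1, then F ∈ OS. -/

import Mathlib

open MeasureTheory Filter Set Asymptotics

/-- The tail `F̄(x) = μ((x,∞))` of a distribution `μ` on `ℝ`. -/
noncomputable def tail (μ : MeasureTheory.Measure ℝ) (x : ℝ) : ℝ := (μ (Set.Ioi x)).toReal

/-- Convolution of two distributions on `ℝ`. -/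
noncomputable def mconv (μ ν : MeasureTheory.Measure ℝ) : MeasureTheory.Measure ℝ :=
  MeasureTheory.Measure.map (fun p : ℝ × ℝ => p.1 + p.2) (μ.prod ν)

/-- `iconv μ k` is the `k`-fold convolution `μ^{*k}` (with `μ^{*0} = δ₀`). -/
noncomputable def iconv (μ : MeasureTheory.Measure ℝ) : ℕ → MeasureTheory.Measure ℝ
  | 0 => MeasureTheory.Measure.dirac 0
  | n + 1 => mconv (iconv μ n) μ

/-- The class `L(γ)`: `F̄(x-t) ~ e^{γt} F̄(x)` as `x → ∞`, for every `t`. -/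
def MemL (γ : ℝ) (μ : MeasureTheory.Measure ℝ) : Prop :=
  ∀ t : ℝ, Filter.Tendsto (fun x => tail μ (x - t) / tail μ x) Filter.atTop
    (nhds (Real.exp (γ * t)))

/-- The class `OS`: `limsup_{x→∞} (F*F)̄(x) / F̄(x) < ∞`. -/
def MemOS (μ : MeasureTheory.Measure ℝ) : Prop :=
  Filter.IsBoundedUnder (· ≤ ·) Filter.atTop (fun x => tail (mconv μ μ) x / tail μ x)

/-!
Write `T = (F * F)̄`. Splitting `T(x) = ∫ F̄(x - y) F(dy)` at `y = k` and `y = x - k`, the two outer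
pieces are each at most `F̄(x - k)`, while by `a(F) < 1` the middle piece is at most `b T(x)` for
some `b < 1` and a suitable `k`. Hence `T(x) ≤ 2/(1 - b) F̄(x - k)`, that is `T(x + k) ≤ C F̄(x)`,
and since `F * F ∈ L(γ)` the ratio `T(x + k) / T(x)` tends to `e^{-γk} > 0`, so `T(x) / F̄(x)`
stays bounded.
-/

lemma tail_nonneg (μ : Measure ℝ) (x : ℝ) : 0 ≤ tail μ x := ENNReal.toReal_nonneg

lemma tail_le_one (μ : Measure ℝ) [IsProbabilityMeasure μ] (x : ℝ) : tail μ x ≤ 1 :=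
  ENNReal.toReal_le_of_le_ofReal zero_le_one (by simpa using prob_le_one)

lemma antitone_tail (μ : Measure ℝ) [IsFiniteMeasure μ] : Antitone (tail μ) := fun _ _ hab =>
  ENNReal.toReal_mono (measure_ne_top _ _) (measure_mono (Ioi_subset_Ioi hab))

lemma measurable_measure_Ioi (μ : Measure ℝ) : Measurable fun x : ℝ => μ (Ioi x) :=
  Antitone.measurable fun _ _ hab => measure_mono (Ioi_subset_Ioi hab)

lemma measurable_tail (μ : Measure ℝ) : Measurable (tail μ) :=
  ENNReal.measurable_toReal.comp (measurable_measure_Ioi μ)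

lemma integrable_tail_const_sub (μ ν : Measure ℝ) [IsFiniteMeasure μ] [IsProbabilityMeasure ν]
    (x : ℝ) : Integrable (fun y => tail ν (x - y)) μ :=
  Integrable.of_bound
    ((measurable_tail ν).comp (measurable_const.sub measurable_id)).aestronglyMeasurable 1
    (ae_of_all _ fun y => by
      rw [Real.norm_eq_abs, abs_of_nonneg (tail_nonneg _ _)]
      exact tail_le_one _ _)

lemma tail_mconv (μ ν : Measure ℝ) [IsFiniteMeasure ν] (x : ℝ) :
    tail (mconv μ ν) x = ∫ y, tail ν (x - y) ∂μ := by
  have hlintegral : mconv μ ν (Ioi x) = ∫⁻ y, ν (Ioi (x - y)) ∂μ := by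
    rw [mconv, Measure.map_apply measurable_add measurableSet_Ioi,
      Measure.prod_apply (measurable_add measurableSet_Ioi)]
    refine lintegral_congr fun y => congrArg ν (ext fun z => ?_)
    simp [sub_lt_iff_lt_add, add_comm]
  have hmeas : Measurable fun y => ν (Ioi (x - y)) :=
    (measurable_measure_Ioi ν).comp (measurable_const.sub measurable_id)
  rw [tail, hlintegral,
    ← integral_toReal hmeas.aemeasurable (ae_of_all _ fun _ => measure_lt_top _ _)]
  rfl

section Splitting

variable (μ : Measure ℝ) [IsProbabilityMeasure μ]

lemma setIntegral_Ioc_tail_le_tail_mconv (k x : ℝ) :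
    ∫ y in Ioc k (x - k), tail μ (x - y) ∂μ ≤ tail (mconv μ μ) x := by
  rw [tail_mconv]
  exact setIntegral_le_integral (integrable_tail_const_sub μ μ x)
    (ae_of_all _ fun _ => tail_nonneg _ _)

lemma setIntegral_Iic_tail_le (k x : ℝ) :
    ∫ y in Iic k, tail μ (x - y) ∂μ ≤ tail μ (x - k) :=
  calc ∫ y in Iic k, tail μ (x - y) ∂μ
      ≤ ∫ _ in Iic k, tail μ (x - k) ∂μ :=
        setIntegral_mono_on (integrable_tail_const_sub μ μ x).integrableOn (integrable_const _)
          measurableSet_Iic fun y hy => antitone_tail μ (by linarith [mem_Iic.mp hy])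
    _ = μ.real (Iic k) * tail μ (x - k) := setIntegral_const _
    _ ≤ tail μ (x - k) := mul_le_of_le_one_left (tail_nonneg _ _) measureReal_le_one

lemma setIntegral_Ioi_tail_le (a x : ℝ) :
    ∫ y in Ioi a, tail μ (x - y) ∂μ ≤ tail μ a :=
  calc ∫ y in Ioi a, tail μ (x - y) ∂μ
      ≤ ∫ _ in Ioi a, (1 : ℝ) ∂μ :=
        setIntegral_mono_on (integrable_tail_const_sub μ μ x).integrableOn (integrable_const _)
          measurableSet_Ioi fun _ _ => tail_le_one μ _
    _ = tail μ a := by rw [setIntegral_const, smul_eq_mul, mul_one]; rfl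

lemma tail_mconv_self_le {k x : ℝ} (hkx : k ≤ x - k) :
    tail (mconv μ μ) x ≤ 2 * tail μ (x - k) + ∫ y in Ioc k (x - k), tail μ (x - y) ∂μ := by
  have hint := integrable_tail_const_sub μ μ x
  have hsplit : tail (mconv μ μ) x = (∫ y in Iic k, tail μ (x - y) ∂μ)
      + (∫ y in Ioc k (x - k), tail μ (x - y) ∂μ) + ∫ y in Ioi (x - k), tail μ (x - y) ∂μ := by
    rw [tail_mconv, ← setIntegral_univ, ← Iic_union_Ioi (a := x - k),
      setIntegral_union (Iic_disjoint_Ioi le_rfl) measurableSet_Ioi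
        hint.integrableOn hint.integrableOn,
      ← Iic_union_Ioc_eq_Iic hkx,
      setIntegral_union (Iic_disjoint_Ioc le_rfl) measurableSet_Ioc
        hint.integrableOn hint.integrableOn]
  linarith [setIntegral_Iic_tail_le μ k x, setIntegral_Ioi_tail_le μ (x - k) x]

lemma eventually_tail_mconv_self_le_of_ratio_lt {k b : ℝ} (hb : b < 1)
    (hratio : ∀ᶠ x in atTop,
      (∫ y in Ioc k (x - k), tail μ (x - y) ∂μ) / tail (mconv μ μ) x < b) :
    ∀ᶠ x in atTop, tail (mconv μ μ) x ≤ 2 / (1 - b) * tail μ (x - k) := by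
  filter_upwards [hratio, eventually_ge_atTop (2 * k)] with x hx h2k
  rw [div_mul_eq_mul_div, le_div_iff₀ (by linarith)]
  rcases (tail_nonneg (mconv μ μ) x).eq_or_lt with hT | hT
  · rw [← hT]
    nlinarith [tail_nonneg μ (x - k)]
  · have hmiddle := (div_lt_iff₀ hT).mp hx
    nlinarith [tail_mconv_self_le μ (show k ≤ x - k by linarith)]

end Splitting

lemma Filter.exists_eventually_lt_of_limsup_limsup_lt {ι α : Type*} {l : Filter ι} [l.NeBot]
    {l' : Filter α} [l'.NeBot] {r : ι → α → ℝ} (hr₀ : ∀ k x, 0 ≤ r k x) (hr₁ : ∀ k x, r k x ≤ 1)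
    (h : limsup (fun k => limsup (r k) l') l < 1) :
    ∃ k, ∃ b < 1, ∀ᶠ x in l', r k x < b := by
  obtain ⟨b, hlt, hb⟩ := exists_between h
  have hbdd : ∀ k, IsBoundedUnder (· ≤ ·) l' (r k) := fun k => isBoundedUnder_of ⟨1, hr₁ k⟩
  have hlimsup_le : ∀ k, limsup (r k) l' ≤ 1 := fun k =>
    limsup_le_of_le (isBoundedUnder_of ⟨0, hr₀ k⟩).isCoboundedUnder_le
      (Eventually.of_forall (hr₁ k))
  obtain ⟨k, hk⟩ := (eventually_lt_of_limsup_lt hlt (isBoundedUnder_of ⟨1, hlimsup_le⟩)).exists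
  exact ⟨k, b, hb, eventually_lt_of_limsup_lt hk (hbdd k)⟩

lemma memOS_of_tail_mconv_self_le {μ : Measure ℝ} {γ C k : ℝ} (hL : MemL γ (mconv μ μ))
    (hle : ∀ᶠ x in atTop, tail (mconv μ μ) x ≤ C * tail μ (x - k)) : MemOS μ := by
  set T := tail (mconv μ μ)
  set ε := Real.exp (γ * -k) / 2
  have hε : 0 < ε := by positivity
  have hratio : ∀ᶠ x in atTop, ε < T (x + k) / T x := by
    simpa only [sub_neg_eq_add] using
      (hL (-k)).eventually (eventually_gt_nhds (half_lt_self (Real.exp_pos _)))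
  have hshift : ∀ᶠ x in atTop, T (x + k) ≤ C * tail μ x := by
    simpa only [id, add_sub_cancel_right] using
      (tendsto_atTop_add_const_right atTop k tendsto_id).eventually hle
  refine isBoundedUnder_of_eventually_le (a := C / ε) ?_
  filter_upwards [hratio, hshift] with x hx hxk
  have hT : 0 < T x := (tail_nonneg _ x).lt_of_ne fun h : 0 = T x => by
    rw [← h, div_zero] at hx
    exact hε.not_gt hx
  have hgrowth : ε * T x < C * tail μ x := ((lt_div_iff₀ hT).mp hx).trans_le hxk
  have htail : 0 < tail μ x :=
    (tail_nonneg μ x).lt_of_ne fun h : 0 = tail μ x => by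
      rw [← h, mul_zero] at hgrowth
      exact (mul_pos hε hT).not_gt hgrowth
  rw [div_le_div_iff₀ htail hε]
  linarith

theorem stmt9_general (F : Measure ℝ) [IsProbabilityMeasure F]
    (γ : ℝ)
    (hL2 : MemL γ (mconv F F))
    (ha : Filter.limsup (fun k : ℝ =>
      Filter.limsup (fun x : ℝ =>
        (∫ y in Set.Ioc k (x - k), tail F (x - y) ∂F) / tail (mconv F F) x) Filter.atTop)
      Filter.atTop < 1) :
    MemOS F := by
  obtain ⟨k, b, hb, hratio⟩ := Filter.exists_eventually_lt_of_limsup_limsup_lt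
    (fun _ x => div_nonneg (setIntegral_nonneg measurableSet_Ioc fun _ _ => tail_nonneg _ _)
      (tail_nonneg _ x))
    (fun k x => div_le_one_of_le₀ (setIntegral_Ioc_tail_le_tail_mconv F k x) (tail_nonneg _ x)) ha
  exact memOS_of_tail_mconv_self_le hL2 (eventually_tail_mconv_self_le_of_ratio_lt F hb hratio)

theorem stmt9 (c : ℝ) (hc : 0 ≤ c) (F : Measure ℝ) [IsProbabilityMeasure F]
    (hs : F (Set.Iio (-c)) = 0) (γ : ℝ) (hγ : 0 ≤ γ)
    (hm : MeasureTheory.Integrable (fun y => Real.exp (γ * y)) F)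
    (hL2 : MemL γ (mconv F F))
    (ha : Filter.limsup (fun k : ℝ =>
      Filter.limsup (fun x : ℝ =>
        (∫ y in Set.Ioc k (x - k), tail F (x - y) ∂F) / tail (mconv F F) x) Filter.atTop)
      Filter.atTop < 1) :
    MemOS F :=
  stmt9_general F γ hL2 ha
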